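/- Transfer of the closing property to conics through the same secant points: Let R, S ∈ ℝ³ be linearly independent with ⟨R,R⟩ = 0 and ⟨S,S⟩ = 0, and let W = span{R,S} (the line ℓ meets the conic C in the points R and S). Let P₁,…,P_{2n} ∈ W with ⟨Pᵢ,Pᵢ⟩ ≠ 0 have the closing property with respect to the Minkowski form. Let B be any nondegenerate symmetric bilinear form on ℝ³ with B(R,R) = 0 and B(S,S) = 0 (a conic D through R and S) such that B(Pᵢ,Pᵢ) ≠ 0 for all i. Then P₁,…,P_{2n} have the closing property with respect to B. -/

import Mathlib

/-! For `P = a R + b S` on the secant `W = span {R, S}` and a symmetric form `F` vanishing at `R`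
and `S`, the reversion `M_P^F` maps `u R + v S` to `-2 F(R,S) (a² v R + b² u S)` and acts on the
`F`-orthogonal complement of `W` as multiplication by `F(P,P) = 2 a b F(R,S)`. When
`F(R,S) ≠ 0` we have `ℝ³ = W ⊕ W^⊥`, so on both summands a composition of `k` such reversions
depends on `F` only through the factor `F(R,S)^k`. If the composition is `c • id` for the
Minkowski form, reading it off on a vector orthogonal to `W` gives `c = ∏ ⟨Pᵢ,Pᵢ⟩`, and the
composition for `B` is `(B(R,S) / ⟨R,S⟩)^k c • id`. -/

/-- Minkowski product on ℝ³. -/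
def mink (X Y : Fin 3 → ℝ) : ℝ := X 0 * Y 0 + X 1 * Y 1 - X 2 * Y 2

/-- The reversion map with respect to the (bilinear) form `B` in the point `P`
(with `B P P ≠ 0`): `M_P^B X = B(P,P)X − 2B(X,P)P`. -/
def revB (B : (Fin 3 → ℝ) → (Fin 3 → ℝ) → ℝ) (P X : Fin 3 → ℝ) : Fin 3 → ℝ :=
  B P P • X - (2 * B X P) • P

/-- `chainB B n P X = (M_{P n}^B ∘ ⋯ ∘ M_{P 1}^B) X`, the composition of the reversions
with respect to `B` in `P 0, …, P (n-1)`, applied in this order. -/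
def chainB (B : (Fin 3 → ℝ) → (Fin 3 → ℝ) → ℝ) :
    (n : ℕ) → (Fin n → (Fin 3 → ℝ)) → (Fin 3 → ℝ) → (Fin 3 → ℝ)
  | 0, _, X => X
  | n + 1, P, X => revB B (P (Fin.last n)) (chainB B n (fun i => P i.castSucc) X)

/-- The points `P 0, …, P (n-1)` have the closing property with respect to the form `B`
iff `M_{P n}^B ∘ ⋯ ∘ M_{P 1}^B` is a nonzero scalar multiple of the identity. For
`B = mink` this is the closing property with respect to the conic `C`. -/
def closesB (B : (Fin 3 → ℝ) → (Fin 3 → ℝ) → ℝ) (n : ℕ) (P : Fin n → (Fin 3 → ℝ)) :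
    Prop :=
  ∃ c : ℝ, c ≠ 0 ∧ ∀ X, chainB B n P X = c • X

open Submodule Module

theorem span_pair_ne_top {K V : Type*} [DivisionRing K] [AddCommGroup V] [Module K V]
    [FiniteDimensional K V] (hV : 2 < finrank K V) (x y : V) : span K {x, y} ≠ ⊤ := by
  classical
  intro htop
  have hrank := (finrank_span_finset_le_card (R := K) ({x, y} : Finset V)).trans Finset.card_le_two
  rw [Finset.coe_pair, Set.finrank, htop, finrank_top] at hrank
  omega

def IsLeftLinear (F : (Fin 3 → ℝ) → (Fin 3 → ℝ) → ℝ) : Prop :=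
  ∀ (c : ℝ) (x x' y : Fin 3 → ℝ), F (c • x + x') y = c * F x y + F x' y

namespace IsLeftLinear

variable {F : (Fin 3 → ℝ) → (Fin 3 → ℝ) → ℝ}

theorem zero_left (hF : IsLeftLinear F) (y : Fin 3 → ℝ) : F 0 y = 0 := by
  simpa using hF (-1) 0 0 y

theorem smul_left (hF : IsLeftLinear F) (c : ℝ) (x y : Fin 3 → ℝ) : F (c • x) y = c * F x y := by
  simpa [hF.zero_left] using hF c x 0 y

theorem add_left (hF : IsLeftLinear F) (x x' y : Fin 3 → ℝ) : F (x + x') y = F x y + F x' y := by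
  simpa using hF 1 x x' y

theorem sub_left (hF : IsLeftLinear F) (x x' y : Fin 3 → ℝ) : F (x - x') y = F x y - F x' y := by
  simpa [sub_eq_neg_add, neg_mul, ← sub_eq_neg_add] using hF (-1) x' x y

theorem smul_add_smul_left (hF : IsLeftLinear F) (a b : ℝ) (x x' y : Fin 3 → ℝ) :
    F (a • x + b • x') y = a * F x y + b * F x' y := by
  rw [hF, hF.smul_left]

end IsLeftLinear

theorem isLeftLinear_mink : IsLeftLinear mink := by
  intro c x x' y
  simp only [mink, Pi.add_apply, Pi.smul_apply, smul_eq_mul]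
  ring

theorem mink_comm (x y : Fin 3 → ℝ) : mink x y = mink y x := by
  simp only [mink]
  ring

section Reversion

variable {F : (Fin 3 → ℝ) → (Fin 3 → ℝ) → ℝ}

theorem revB_add (hF : IsLeftLinear F) (P X Y : Fin 3 → ℝ) :
    revB F P (X + Y) = revB F P X + revB F P Y := by
  simp only [revB, hF.add_left]
  module

theorem revB_smul (hF : IsLeftLinear F) (P : Fin 3 → ℝ) (c : ℝ) (X : Fin 3 → ℝ) :
    revB F P (c • X) = c • revB F P X := by
  simp only [revB, hF.smul_left]
  module

theorem revB_mem {F : (Fin 3 → ℝ) → (Fin 3 → ℝ) → ℝ} {W : Submodule ℝ (Fin 3 → ℝ)}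
    {P Y : Fin 3 → ℝ} (hP : P ∈ W) (hY : Y ∈ W) : revB F P Y ∈ W :=
  W.sub_mem (W.smul_mem _ hY) (W.smul_mem _ hP)

theorem chainB_mem {F : (Fin 3 → ℝ) → (Fin 3 → ℝ) → ℝ} {W : Submodule ℝ (Fin 3 → ℝ)} :
    ∀ {k : ℕ} {Q : Fin k → Fin 3 → ℝ} {Y : Fin 3 → ℝ}, (∀ j, Q j ∈ W) → Y ∈ W →
      chainB F k Q Y ∈ W
  | 0, _, _, _, hY => hY
  | _ + 1, _, _, hQ, hY => revB_mem (hQ _) (chainB_mem (fun _ => hQ _) hY)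

theorem chainB_add (hF : IsLeftLinear F) :
    ∀ (k : ℕ) (Q : Fin k → Fin 3 → ℝ) (X Y : Fin 3 → ℝ),
      chainB F k Q (X + Y) = chainB F k Q X + chainB F k Q Y
  | 0, _, _, _ => rfl
  | k + 1, Q, X, Y => by
    simp only [chainB]
    rw [chainB_add hF k, revB_add hF]

theorem chainB_eq_prod_smul (hF : IsLeftLinear F) :
    ∀ (k : ℕ) (Q : Fin k → Fin 3 → ℝ) (Z : Fin 3 → ℝ), (∀ j, F Z (Q j) = 0) →
      chainB F k Q Z = (∏ j, F (Q j) (Q j)) • Z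
  | 0, _, _, _ => by simp [chainB]
  | k + 1, Q, Z, hZ => by
    simp only [chainB]
    rw [chainB_eq_prod_smul hF k _ Z (fun j => hZ j.castSucc), revB, hF.smul_left, hZ,
      Fin.prod_univ_castSucc]
    module

end Reversion

structure IsConicThrough (F : (Fin 3 → ℝ) → (Fin 3 → ℝ) → ℝ) (R S : Fin 3 → ℝ) : Prop where
  leftLinear : IsLeftLinear F
  symm : ∀ x y, F x y = F y x
  fst_mem : F R R = 0
  snd_mem : F S S = 0

namespace IsConicThrough

variable {F G : (Fin 3 → ℝ) → (Fin 3 → ℝ) → ℝ} {R S : Fin 3 → ℝ}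

theorem apply_smul_add_smul (hF : IsConicThrough F R S) (a b u v : ℝ) :
    F (a • R + b • S) (u • R + v • S) = (a * v + b * u) * F R S := by
  rw [hF.leftLinear.smul_add_smul_left, hF.symm R, hF.symm S,
    hF.leftLinear.smul_add_smul_left, hF.leftLinear.smul_add_smul_left, hF.fst_mem, hF.snd_mem,
    hF.symm S R]
  ring

theorem ne_zero_of_apply_self_ne_zero (hF : IsConicThrough F R S) {P : Fin 3 → ℝ}
    (hP : P ∈ span ℝ {R, S}) (hPP : F P P ≠ 0) : F R S ≠ 0 := by
  obtain ⟨a, b, rfl⟩ := mem_span_pair.mp hP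
  rw [hF.apply_smul_add_smul] at hPP
  exact right_ne_zero_of_mul hPP

theorem apply_eq_zero_of_mem_span (hF : IsConicThrough F R S) {Z Y : Fin 3 → ℝ}
    (hZR : F Z R = 0) (hZS : F Z S = 0) (hY : Y ∈ span ℝ {R, S}) : F Z Y = 0 := by
  obtain ⟨a, b, rfl⟩ := mem_span_pair.mp hY
  rw [hF.symm, hF.leftLinear.smul_add_smul_left, hF.symm R, hF.symm S, hZR, hZS]
  ring

theorem exists_add_orthogonal (hF : IsConicThrough F R S) (hFRS : F R S ≠ 0) (X : Fin 3 → ℝ) :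
    ∃ Y ∈ span ℝ {R, S}, ∃ Z, (∀ Y' ∈ span ℝ {R, S}, F Z Y' = 0) ∧ Y + Z = X := by
  set Y := (F X S / F R S) • R + (F X R / F R S) • S
  have hY : Y ∈ span ℝ {R, S} := mem_span_pair.mpr ⟨_, _, rfl⟩
  refine ⟨Y, hY, X - Y, fun Y' hY' => hF.apply_eq_zero_of_mem_span ?_ ?_ hY', add_sub_cancel Y X⟩
  · rw [hF.leftLinear.sub_left, hF.leftLinear.smul_add_smul_left, hF.fst_mem, hF.symm S R]
    field_simp
    ring
  · rw [hF.leftLinear.sub_left, hF.leftLinear.smul_add_smul_left, hF.snd_mem]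
    field_simp
    ring

theorem exists_ne_zero_orthogonal (hF : IsConicThrough F R S) (hFRS : F R S ≠ 0) :
    ∃ Z ≠ 0, ∀ Y ∈ span ℝ {R, S}, F Z Y = 0 := by
  have hspan : span ℝ {R, S} ≠ ⊤ := span_pair_ne_top (by simp) R S
  obtain ⟨X, hX⟩ : ∃ X, X ∉ span ℝ {R, S} := by
    by_contra! h
    exact hspan (eq_top_iff.mpr fun X _ => h X)
  obtain ⟨Y, hY, Z, hZ, rfl⟩ := hF.exists_add_orthogonal hFRS X
  refine ⟨Z, fun hZ0 => hX ?_, hZ⟩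
  simpa [hZ0] using hY

theorem revB_smul_add_smul (hF : IsConicThrough F R S) (a b u v : ℝ) :
    revB F (a • R + b • S) (u • R + v • S) =
      (-2 * F R S) • ((a ^ 2 * v) • R + (b ^ 2 * u) • S) := by
  rw [revB, hF.apply_smul_add_smul, hF.apply_smul_add_smul]
  module

theorem smul_revB_eq (hF : IsConicThrough F R S) (hG : IsConicThrough G R S) {P Y : Fin 3 → ℝ}
    (hP : P ∈ span ℝ {R, S}) (hY : Y ∈ span ℝ {R, S}) :
    G R S • revB F P Y = F R S • revB G P Y := by
  obtain ⟨a, b, rfl⟩ := mem_span_pair.mp hP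
  obtain ⟨u, v, rfl⟩ := mem_span_pair.mp hY
  rw [hF.revB_smul_add_smul, hG.revB_smul_add_smul]
  module

theorem smul_chainB_eq (hF : IsConicThrough F R S) (hG : IsConicThrough G R S) :
    ∀ (k : ℕ) (Q : Fin k → Fin 3 → ℝ), (∀ j, Q j ∈ span ℝ {R, S}) →
      ∀ Y ∈ span ℝ {R, S}, G R S ^ k • chainB F k Q Y = F R S ^ k • chainB G k Q Y
  | 0, _, _, _, _ => by simp [chainB]
  | k + 1, Q, hQ, Y, hY => by
    have ih := smul_chainB_eq hF hG k _ (fun j => hQ j.castSucc) Y hY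
    set P := Q (Fin.last k)
    calc G R S ^ (k + 1) • chainB F (k + 1) Q Y
        = G R S • revB F P (G R S ^ k • chainB F k (fun j => Q j.castSucc) Y) := by
          rw [chainB, revB_smul hF.leftLinear, smul_smul, pow_succ']
      _ = F R S ^ k • (G R S • revB F P (chainB G k (fun j => Q j.castSucc) Y)) := by
          rw [ih, revB_smul hF.leftLinear, smul_comm]
      _ = F R S ^ (k + 1) • chainB G (k + 1) Q Y := by
          rw [hF.smul_revB_eq hG (hQ _) (chainB_mem (fun j => hQ _) hY), smul_smul, ← pow_succ,
            chainB]

theorem mul_prod_eq (hF : IsConicThrough F R S) (hG : IsConicThrough G R S) {k : ℕ}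
    {Q : Fin k → Fin 3 → ℝ} (hQ : ∀ j, Q j ∈ span ℝ {R, S}) :
    G R S ^ k * ∏ j, F (Q j) (Q j) = F R S ^ k * ∏ j, G (Q j) (Q j) := by
  have hself : ∀ j, G R S * F (Q j) (Q j) = F R S * G (Q j) (Q j) := fun j => by
    obtain ⟨a, b, hab⟩ := mem_span_pair.mp (hQ j)
    rw [← hab, hF.apply_smul_add_smul, hG.apply_smul_add_smul]
    ring
  have := Finset.prod_congr rfl fun j (_ : j ∈ Finset.univ) => hself j
  simpa [Finset.prod_mul_distrib] using this

end IsConicThrough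

section Transfer

variable {F G : (Fin 3 → ℝ) → (Fin 3 → ℝ) → ℝ} {R S : Fin 3 → ℝ} {k : ℕ} {Q : Fin k → Fin 3 → ℝ}

theorem prod_eq_of_chainB_eq_smul (hG : IsConicThrough G R S) (hGRS : G R S ≠ 0)
    (hQ : ∀ j, Q j ∈ span ℝ {R, S}) {c : ℝ} (hc : ∀ X, chainB G k Q X = c • X) :
    ∏ j, G (Q j) (Q j) = c := by
  obtain ⟨Z, hZ0, hZ⟩ := hG.exists_ne_zero_orthogonal hGRS
  have hchain := chainB_eq_prod_smul hG.leftLinear k Q Z fun j => hZ _ (hQ j)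
  rw [hc] at hchain
  exact smul_left_injective ℝ hZ0 hchain.symm

theorem closesB_of_closesB (hF : IsConicThrough F R S) (hG : IsConicThrough G R S)
    (hFRS : F R S ≠ 0) (hGRS : G R S ≠ 0) (hQ : ∀ j, Q j ∈ span ℝ {R, S})
    (hclose : closesB G k Q) : closesB F k Q := by
  obtain ⟨c, hc0, hc⟩ := hclose
  refine ⟨(F R S / G R S) ^ k * c, mul_ne_zero (pow_ne_zero k (div_ne_zero hFRS hGRS)) hc0,
    fun X => ?_⟩
  obtain ⟨Y, hY, Z, hZ, rfl⟩ := hF.exists_add_orthogonal hFRS X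
  have hchainY : G R S ^ k • chainB F k Q Y = (F R S ^ k * c) • Y := by
    rw [hF.smul_chainB_eq hG k Q hQ Y hY, hc, smul_smul]
  have hchainZ : G R S ^ k • chainB F k Q Z = (F R S ^ k * c) • Z := by
    rw [chainB_eq_prod_smul hF.leftLinear k Q Z fun j => hZ _ (hQ j), smul_smul,
      hF.mul_prod_eq hG hQ, prod_eq_of_chainB_eq_smul hG hGRS hQ hc]
  apply smul_right_injective _ (pow_ne_zero k hGRS)
  dsimp only
  rw [chainB_add hF.leftLinear, smul_add, hchainY, hchainZ, smul_smul, div_pow, ← mul_assoc,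
    mul_div_cancel₀ _ (pow_ne_zero k hGRS), smul_add]

end Transfer

theorem closing_transfer_secant_general
    (R S : Fin 3 → ℝ)
    (hRC : mink R R = 0) (hSC : mink S S = 0)
    (n : ℕ) (P : Fin (2 * n) → (Fin 3 → ℝ))
    (hPW : ∀ i, P i ∈ Submodule.span ℝ {R, S})
    (hPC : ∀ i, mink (P i) (P i) ≠ 0)
    (hclose : closesB mink (2 * n) P)
    (B : (Fin 3 → ℝ) → (Fin 3 → ℝ) → ℝ)
    (hBlin : ∀ (c : ℝ) (x x' y : Fin 3 → ℝ), B (c • x + x') y = c * B x y + B x' y)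
    (hBsymm : ∀ x y, B x y = B y x)
    (hBR : B R R = 0) (hBS : B S S = 0)
    (hBP : ∀ i, B (P i) (P i) ≠ 0) :
    closesB B (2 * n) P := by
  obtain rfl | hn := Nat.eq_zero_or_pos n
  · exact ⟨1, one_ne_zero, fun X => (one_smul ℝ X).symm⟩
  let i : Fin (2 * n) := ⟨0, by omega⟩
  have hB : IsConicThrough B R S := ⟨hBlin, hBsymm, hBR, hBS⟩
  have hmink : IsConicThrough mink R S := ⟨isLeftLinear_mink, mink_comm, hRC, hSC⟩
  exact closesB_of_closesB hB hmink (hB.ne_zero_of_apply_self_ne_zero (hPW i) (hBP i))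
    (hmink.ne_zero_of_apply_self_ne_zero (hPW i) (hPC i)) hPW hclose

/-- **Transfer of the closing property to conics through the same secant points.**
If `P 0, …, P (2n-1)` on the line spanned by `R, S ∈ C` have the closing property with
respect to the Minkowski form, then they have the closing property with respect to any
nondegenerate symmetric bilinear form `B` vanishing on `R` and `S` (i.e. with respect to
any conic through `R` and `S`) for which the `P i` are off the corresponding conic. -/
theorem closing_transfer_secant
    (R S : Fin 3 → ℝ) (hRS : LinearIndependent ℝ ![R, S])
    (hRC : mink R R = 0) (hSC : mink S S = 0)
    (n : ℕ) (P : Fin (2 * n) → (Fin 3 → ℝ))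
    (hPW : ∀ i, P i ∈ Submodule.span ℝ {R, S})
    (hPC : ∀ i, mink (P i) (P i) ≠ 0)
    (hclose : closesB mink (2 * n) P)
    (B : (Fin 3 → ℝ) → (Fin 3 → ℝ) → ℝ)
    (hBlin : ∀ (c : ℝ) (x x' y : Fin 3 → ℝ), B (c • x + x') y = c * B x y + B x' y)
    (hBsymm : ∀ x y, B x y = B y x)
    (hBnd : ∀ x, (∀ y, B x y = 0) → x = 0)
    (hBR : B R R = 0) (hBS : B S S = 0)
    (hBP : ∀ i, B (P i) (P i) ≠ 0) :
    closesB B (2 * n) P :=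
  closing_transfer_secant_general R S hRC hSC n P hPW hPC hclose B hBlin hBsymm hBR hBS hBP
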